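/- For any simple, simply-connected complex algebraic group G, there is an embedding of G-representations V(ρ) ⊗ V(ρ) ↪ H•(G/B, ∧•𝒯_{G/B}); equivalently, by the Hochschild–Kostant–Rosenberg isomorphism, an embedding of 𝔤-representations V(ρ) ⊗ V(ρ) ↪ HH•(G/B) into the total Hochschild cohomology of the flag variety. -/

import Mathlib

open scoped BigOperators

namespace KostantHH

/-- The integral weight lattice of a rank-`ℓ` simple, simply-connected group /
simple Lie algebra, written in fundamental-weight coordinates (so the
fundamental weights `ϖᵢ` are the standard basis vectors, and pairing a weight
with the `i`-th simple coroot is taking its `i`-th coordinate). -/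
abbrev P (ℓ : ℕ) := Fin ℓ → ℤ

/-- The group algebra `ℤ[P]` of the weight lattice. -/
abbrev R (ℓ : ℕ) := AddMonoidAlgebra ℤ (P ℓ)

/-- `e μ` is the basis element `e^μ` of `ℤ[P]`. -/
noncomputable def e {ℓ : ℕ} (μ : P ℓ) : R ℓ := AddMonoidAlgebra.single μ 1

/-- The Weyl vector `ρ = ϖ₁ + ⋯ + ϖ_ℓ`, i.e. `(1,…,1)` in fundamental-weight
coordinates. -/
def ρ {ℓ : ℕ} : P ℓ := fun _ => 1

/-- A weight is dominant iff all its fundamental-weight coordinates (= pairings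
with the simple coroots) are nonnegative. -/
def dominant {ℓ : ℕ} (lam : P ℓ) : Prop := ∀ i, 0 ≤ lam i

/-- The combinatorial root datum of a finite-dimensional simple complex Lie
algebra `𝔤` of rank `ℓ`: the simple roots `α i` (written in fundamental-weight
coordinates, so that `α i j = ⟨α i, αⱼ^∨⟩` is the Cartan matrix) and the set
`Φpos` of positive roots, whose sum is `2ρ`. -/
structure RootDatum (ℓ : ℕ) where
  α : Fin ℓ → P ℓ
  cartan_diag : ∀ i, α i i = 2
  cartan_offdiag : ∀ i j, i ≠ j → α i j ≤ 0
  Φpos : Finset (P ℓ)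
  simple_mem : ∀ i, α i ∈ Φpos
  pos_in_cone : ∀ β ∈ Φpos, ∃ c : Fin ℓ → ℕ, β = ∑ i, (c i : ℤ) • α i
  sum_pos_roots : ∑ β ∈ Φpos, β = (2 : ℤ) • ρ

/-- The dominance (Bruhat–Chevalley) order on weights: `λ ≤ μ` iff `μ - λ` is a
nonnegative integral combination of the simple roots (i.e. lies in `Q⁺`). -/
def domle {ℓ : ℕ} (S : RootDatum ℓ) (lam mu : P ℓ) : Prop :=
  ∃ c : Fin ℓ → ℕ, mu - lam = ∑ i, (c i : ℤ) • S.α i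

/-- The simple reflection `sᵢ(μ) = μ - ⟨μ, αᵢ^∨⟩ αᵢ`, as an automorphism of the
weight lattice. -/
def sRefl {ℓ : ℕ} (S : RootDatum ℓ) (i : Fin ℓ) : AddAut (P ℓ) where
  toFun μ := μ - μ i • S.α i
  invFun μ := μ - μ i • S.α i
  left_inv := by
    intro μ
    funext j
    simp only [Pi.sub_apply, Pi.smul_apply, smul_eq_mul]
    rw [S.cartan_diag i]
    ring
  right_inv := by
    intro μ
    funext j
    simp only [Pi.sub_apply, Pi.smul_apply, smul_eq_mul]
    rw [S.cartan_diag i]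
    ring
  map_add' := by
    intro μ ν
    funext j
    simp only [Pi.add_apply, Pi.sub_apply, Pi.smul_apply, smul_eq_mul]
    ring

/-- The multiplicative group structure on `AddAut A` (composition), as in the older Mathlib,
where `AddAut A` was a `Group`; it is now an additive group. -/
instance addAutMulGroup (A : Type*) [Add A] : Group (AddAut A) where
  mul g h := AddEquiv.trans h g
  one := AddEquiv.refl _
  inv := AddEquiv.symm
  mul_assoc _ _ _ := rfl
  one_mul _ := rfl
  mul_one _ := rfl
  inv_mul_cancel := AddEquiv.self_trans_symm

/-- The Weyl group `W`, realized as the subgroup of automorphisms of the weight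
lattice generated by the simple reflections. -/
def Wgrp {ℓ : ℕ} (S : RootDatum ℓ) : Subgroup (AddAut (P ℓ)) :=
  Subgroup.closure (Set.range (sRefl S))

/-- `w₀` is the longest element of the Weyl group: the (unique) element sending
all positive roots to negative roots. -/
def IsLongest {ℓ : ℕ} (S : RootDatum ℓ) (w₀ : AddAut (P ℓ)) : Prop :=
  w₀ ∈ Wgrp S ∧ ∀ β ∈ S.Φpos, -(w₀ β) ∈ S.Φpos

/-- The action of a Weyl group element on the group algebra `ℤ[P]`,
`w(e^μ) := e^{w μ}`. -/
noncomputable def wact {ℓ : ℕ} (w : AddAut (P ℓ)) (f : R ℓ) : R ℓ :=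
  .ofCoeff (Finsupp.mapDomain (⇑w) f.coeff)

/-- The involution `◇` of `ℤ[P]`, determined by `◇(e^μ) = e^{-μ}`. -/
noncomputable def dia {ℓ : ℕ} (f : R ℓ) : R ℓ :=
  .ofCoeff (Finsupp.mapDomain (fun μ : P ℓ => -μ) f.coeff)

/-- The shifted (dot) action of the Weyl group on weights:
`w · λ = w(λ + ρ) - ρ`. -/
def dot {ℓ : ℕ} (w : AddAut (P ℓ)) (lam : P ℓ) : P ℓ := w (lam + ρ) - ρ

/-- `D` is the `i`-th Demazure operator `Dᵢ(f) = (f - e^{-αᵢ}·sᵢ(f))/(1 - e^{-αᵢ})`,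
characterized by the equation `Dᵢ(f)·(1 - e^{-αᵢ}) = f - e^{-αᵢ}·sᵢ(f)`. -/
def IsDemazure {ℓ : ℕ} (S : RootDatum ℓ) (i : Fin ℓ) (D : Module.End ℤ (R ℓ)) : Prop :=
  ∀ f : R ℓ, D f * (1 - e (-(S.α i))) = f - e (-(S.α i)) * wact (sRefl S i) f

/-- `Dw0` is the Demazure operator `D_{w₀} = D_{i₁} ∘ ⋯ ∘ D_{i_k}` attached to a
reduced word `w₀ = s_{i₁} ⋯ s_{i_k}` for the longest element `w₀` (a word for
`w₀` is reduced iff its length is `#Φ⁺ = ℓ(w₀)`). -/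
def IsDw0 {ℓ : ℕ} (S : RootDatum ℓ) (w₀ : AddAut (P ℓ))
    (Dw0 : Module.End ℤ (R ℓ)) : Prop :=
  ∃ (word : List (Fin ℓ)) (D : Fin ℓ → Module.End ℤ (R ℓ)),
    (∀ i, IsDemazure S i (D i)) ∧
    (word.map (sRefl S)).prod = w₀ ∧
    word.length = S.Φpos.card ∧
    Dw0 = (word.map D).prod

/-- The characters of the finite-dimensional irreducible highest weight
`𝔤`-modules `V(λ)`: `chV λ = ch V(λ) = ∑_μ (dim V(λ)_μ) e^μ ∈ ℤ[P]` for
dominant `λ`.  The recorded axioms express that `V(λ)` is a `𝔤`-module with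
highest weight `λ` occurring with multiplicity one: weight multiplicities are
nonnegative, the coefficient of `e^λ` is `1`, all weights are `≤ λ` in
dominance order, and the character is Weyl-group invariant. -/
structure CharTheory {ℓ : ℕ} (S : RootDatum ℓ) where
  chV : P ℓ → R ℓ
  chV_coeff_nonneg : ∀ lam μ, 0 ≤ (chV lam).coeff μ
  chV_self : ∀ lam, dominant lam → (chV lam).coeff lam = 1
  chV_support_le : ∀ lam, dominant lam → ∀ μ ∈ (chV lam).coeff.support, domle S μ lam
  chV_invariant : ∀ lam, dominant lam → ∀ i, wact (sRefl S i) (chV lam) = chV lam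

/-- `g ∈ ℤ[P]` is the character of a finite-dimensional `𝔤`-module, i.e. a sum
of characters of irreducibles `V(μ)` with `μ` dominant. -/
def IsChar {ℓ : ℕ} {S : RootDatum ℓ} (T : CharTheory S) (g : R ℓ) : Prop :=
  ∃ l : List (P ℓ), (∀ μ ∈ l, dominant μ) ∧ g = (l.map T.chV).sum

/-- The irreducible `V(λ)` occurs with multiplicity at least `m` in the
(semisimple, finite-dimensional) `𝔤`-module with character `g`. -/
def OccursWithMult {ℓ : ℕ} {S : RootDatum ℓ} (T : CharTheory S) (m : ℕ)
    (lam : P ℓ) (g : R ℓ) : Prop :=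
  ∃ h : R ℓ, IsChar T h ∧ g = (m : ℤ) • T.chV lam + h

/-- The irreducible `V(λ)` occurs as a subrepresentation of the (semisimple,
finite-dimensional) `𝔤`-module with character `g`. -/
def Occurs {ℓ : ℕ} {S : RootDatum ℓ} (T : CharTheory S) (lam : P ℓ) (g : R ℓ) : Prop :=
  OccursWithMult T 1 lam g

/-!
By Demazure's Euler–Poincaré formula and `◇(∏_{β>0}(1 + e^{-β})) = e^{2ρ} ∏_{β>0}(1 + e^{-β})
= e^ρ ch V(ρ)`, the Euler characteristic of `∧•𝒯_{G/B}` is `◇ D_{w₀}(e^ρ ch V(ρ))`, which by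
Brauer's formula is `◇(ch V(ρ)²)`; the same identity shows `◇ ch V(ρ) = ch V(ρ)`. The total cohomology is the Euler characteristic
plus twice the odd-degree cohomology, and the latter is the character of a `G`-module.
-/

noncomputable def diaHom (ℓ : ℕ) : R ℓ →+* R ℓ :=
  AddMonoidAlgebra.mapDomainRingHom ℤ (negAddMonoidHom : P ℓ →+ P ℓ)

lemma dia_eq_diaHom {ℓ : ℕ} (f : R ℓ) : dia f = diaHom ℓ f := rfl

lemma e_zero {ℓ : ℕ} : e (0 : P ℓ) = 1 := rfl

lemma e_add {ℓ : ℕ} (μ ν : P ℓ) : e (μ + ν) = e μ * e ν := by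
  simp [e, AddMonoidAlgebra.single_mul_single]

lemma e_sum {ℓ : ℕ} (s : Finset (P ℓ)) : e (∑ β ∈ s, β) = ∏ β ∈ s, e β := by
  induction s using Finset.cons_induction with
  | empty => exact e_zero
  | cons β s hβ ih => rw [Finset.sum_cons, Finset.prod_cons, e_add, ih]

lemma dia_e {ℓ : ℕ} (μ : P ℓ) : dia (e μ) = e (-μ) := by
  simp [dia, e, Finsupp.mapDomain_single]

lemma dia_mul {ℓ : ℕ} (f g : R ℓ) : dia (f * g) = dia f * dia g :=
  map_mul (diaHom ℓ) f g

lemma dia_one_add_e_neg {ℓ : ℕ} (β : P ℓ) : dia (1 + e (-β)) = e β * (1 + e (-β)) := by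
  rw [dia_eq_diaHom, map_add, map_one, ← dia_eq_diaHom, dia_e, neg_neg, mul_add, mul_one,
    ← e_add, add_neg_cancel, e_zero, add_comm]

lemma dia_prod_one_add_e_neg {ℓ : ℕ} (s : Finset (P ℓ)) :
    dia (∏ β ∈ s, (1 + e (-β))) = e (∑ β ∈ s, β) * ∏ β ∈ s, (1 + e (-β)) := by
  rw [dia_eq_diaHom, map_prod, e_sum, ← Finset.prod_mul_distrib]
  exact Finset.prod_congr rfl fun β _ => dia_one_add_e_neg β

lemma dia_prod_posRoots {ℓ : ℕ} (S : RootDatum ℓ) :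
    dia (∏ β ∈ S.Φpos, (1 + e (-β))) = e ρ * (e ρ * ∏ β ∈ S.Φpos, (1 + e (-β))) := by
  rw [dia_prod_one_add_e_neg, S.sum_pos_roots, two_smul, e_add, mul_assoc]

lemma dia_e_rho_mul_prod_posRoots {ℓ : ℕ} (S : RootDatum ℓ) :
    dia (e ρ * ∏ β ∈ S.Φpos, (1 + e (-β))) = e ρ * ∏ β ∈ S.Φpos, (1 + e (-β)) := by
  rw [dia_mul, dia_e, dia_prod_posRoots, ← mul_assoc, ← e_add, neg_add_cancel, e_zero, one_mul]

lemma dominant_rho {ℓ : ℕ} : dominant (ρ : P ℓ) := fun _ => zero_le_one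

section IsChar

variable {ℓ : ℕ} {S : RootDatum ℓ} (T : CharTheory S)

lemma isChar_zero : IsChar T 0 :=
  ⟨[], by simp, by simp⟩

variable {T}

lemma IsChar.add {g₁ g₂ : R ℓ} (h₁ : IsChar T g₁) (h₂ : IsChar T g₂) : IsChar T (g₁ + g₂) := by
  obtain ⟨l₁, hl₁, rfl⟩ := h₁
  obtain ⟨l₂, hl₂, rfl⟩ := h₂
  refine ⟨l₁ ++ l₂, fun μ hμ => ?_, by simp⟩
  exact (List.mem_append.mp hμ).elim (hl₁ μ) (hl₂ μ)

lemma isChar_sum {ι : Type*} (s : Finset ι) {f : ι → R ℓ} (hf : ∀ i ∈ s, IsChar T (f i)) :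
    IsChar T (∑ i ∈ s, f i) :=
  Finset.sum_induction f (IsChar T) (fun _ _ => IsChar.add) (isChar_zero T) hf

/-- The sum of characters exceeds their alternating sum by twice the odd-indexed terms. -/
lemma exists_isChar_sum_eq_alternating_sum_add (s : Finset ℕ) {H : ℕ → R ℓ}
    (hH : ∀ i, IsChar T (H i)) :
    ∃ h : R ℓ, IsChar T h ∧ ∑ i ∈ s, H i = ∑ i ∈ s, ((-1) ^ i : ℤ) • H i + h := by
  classical
  refine ⟨∑ i ∈ s, if Even i then 0 else H i + H i,
    isChar_sum s fun i _ => ?_, ?_⟩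
  · split_ifs
    exacts [isChar_zero T, (hH i).add (hH i)]
  · rw [← Finset.sum_add_distrib]
    refine Finset.sum_congr rfl fun i _ => ?_
    rcases Nat.even_or_odd i with hi | hi
    · rw [hi.neg_one_pow, if_pos hi, one_smul, add_zero]
    · rw [hi.neg_one_pow, if_neg (Nat.not_even_iff_odd.mpr hi), neg_one_smul]
      abel

end IsChar

/-- Here `H i` is the character of the `G`-module `H^i(G/B, ∧•𝒯_{G/B})` (vanishing for `i > n`);
`hEuler` is the Demazure Euler–Poincaré formula `χ(∧•𝒯_{G/B}) = ◇(D_{w₀}(◇(ch ∧•𝔲)))` with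
`ch(∧•𝔲) = ∏_{β∈Φ⁺}(1+e^{-β})`, `hBrauer` is Brauer's tensor product formula and `hchρ` the
character formula for `V(ρ)`. -/
theorem Vrho_tensor_Vrho_embeds_in_hochschild_cohomology_general
    {ℓ : ℕ} (S : RootDatum ℓ) (T : CharTheory S)
    (Dw0 : Module.End ℤ (R ℓ))
    (hchρ : T.chV ρ = e ρ * ∏ β ∈ S.Φpos, (1 + e (-β)))
    (hBrauer : ∀ lam mu : P ℓ, dominant lam → dominant mu →
      T.chV lam * T.chV mu = Dw0 (e lam * T.chV mu))
    (n : ℕ) (H : ℕ → R ℓ)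
    (hH : ∀ i, IsChar T (H i))
    (hEuler : ∑ i ∈ Finset.range (n + 1), ((-1) ^ i : ℤ) • H i
      = dia (Dw0 (dia (∏ β ∈ S.Φpos, (1 + e (-β)))))) :
    ∃ h : R ℓ, IsChar T h ∧
      ∑ i ∈ Finset.range (n + 1), H i = T.chV ρ * T.chV ρ + h := by
  have hdia_chρ : dia (T.chV ρ) = T.chV ρ := by
    rw [hchρ, dia_e_rho_mul_prod_posRoots]
  have heuler_char : ∑ i ∈ Finset.range (n + 1), ((-1) ^ i : ℤ) • H i = T.chV ρ * T.chV ρ := by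
    rw [hEuler, dia_prod_posRoots, ← hchρ, ← hBrauer ρ ρ dominant_rho dominant_rho, dia_mul,
      hdia_chρ]
  rw [← heuler_char]
  exact exists_isChar_sum_eq_alternating_sum_add _ hH

/-- For any simple, simply-connected complex algebraic group
`G`, there is an embedding of `G`-representations
`V(ρ) ⊗ V(ρ) ↪ H•(G/B, ∧•𝒯_{G/B})`; equivalently, by the
Hochschild–Kostant–Rosenberg isomorphism, an embedding of `𝔤`-representations
`V(ρ) ⊗ V(ρ) ↪ HH•(G/B)` into the total Hochschild cohomology of the flag
variety.

Here `H i` is the character of the `G`-module `H^i(G/B, ∧•𝒯_{G/B})` (vanishing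
for `i > n`), so `∑_{i ≤ n} H i` is the character of the total cohomology
`H•(G/B, ∧•𝒯_{G/B}) ≅ HH•(G/B)`; each `H i` is the character of a
finite-dimensional `G`-module (`hH`); `hEuler` is the Demazure Euler–Poincaré
characteristic formula `χ_T(∧•𝒯_{G/B}) = ◇(D_{w₀}(◇(ch ∧•𝔲)))` applied to
`𝒯_{G/B} ≅ G ×_B 𝔲` with `ch(∧•𝔲) = ∏_{β∈Φ⁺}(1+e^{-β})`; `hBrauer` is Brauer's
tensor product character formula; and `hchρ` is the character formula for
`V(ρ)`.  The conclusion states that the character of `H•(G/B, ∧•𝒯_{G/B})` is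
the character of `V(ρ) ⊗ V(ρ)` plus the character of a (complementary)
finite-dimensional `G`-module: an embedding of `G`-representations. -/
theorem Vrho_tensor_Vrho_embeds_in_hochschild_cohomology
    {ℓ : ℕ} (S : RootDatum ℓ) (T : CharTheory S)
    (w₀ : AddAut (P ℓ)) (hw₀ : IsLongest S w₀)
    (Dw0 : Module.End ℤ (R ℓ)) (hDw0 : IsDw0 S w₀ Dw0)
    (hchρ : T.chV ρ = e ρ * ∏ β ∈ S.Φpos, (1 + e (-β)))
    (hBrauer : ∀ lam mu : P ℓ, dominant lam → dominant mu →
      T.chV lam * T.chV mu = Dw0 (e lam * T.chV mu))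
    (n : ℕ) (H : ℕ → R ℓ)
    (hH : ∀ i, IsChar T (H i))
    (hEuler : ∑ i ∈ Finset.range (n + 1), ((-1) ^ i : ℤ) • H i
      = dia (Dw0 (dia (∏ β ∈ S.Φpos, (1 + e (-β)))))) :
    ∃ h : R ℓ, IsChar T h ∧
      ∑ i ∈ Finset.range (n + 1), H i = T.chV ρ * T.chV ρ + h :=
  Vrho_tensor_Vrho_embeds_in_hochschild_cohomology_general S T Dw0 hchρ hBrauer n H hH hEuler

end KostantHH
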